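/- Any two (3,3)-nets in P^2(C) each of which has exactly 10 triple points (the 9 mixed triple points plus one further triple point lying inside one of the three classes) and exactly 6 double points are lattice isomorphic. -/
import Mathlib


open scoped Classical

noncomputable section

/-- The complex projective plane `P²(ℂ)`. -/
abbrev ProjPlane : Type := Projectivization ℂ (Fin 3 → ℂ)

/-- A subset of `P²(ℂ)` is a projective line if it is the zero locus of a nonzero
linear form. -/
def IsProjLine (S : Set ProjPlane) : Prop :=
  ∃ f : (Fin 3 → ℂ) →ₗ[ℂ] ℂ, f ≠ 0 ∧ S = {p : ProjPlane | f p.rep = 0}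

/-- The lines of the arrangement `A` passing through the point `p`. -/
def linesThrough (A : Finset (Set ProjPlane)) (p : ProjPlane) : Finset (Set ProjPlane) :=
  A.filter fun L => p ∈ L

/-- The multiplicity of a point `p` with respect to the arrangement `A`. -/
def mult (A : Finset (Set ProjPlane)) (p : ProjPlane) : ℕ :=
  (linesThrough A p).card

/-- `p` is a multiple point of the arrangement `A` (at least two lines pass through it). -/
def IsMultPoint (A : Finset (Set ProjPlane)) (p : ProjPlane) : Prop :=
  2 ≤ mult A p

/-- A `q`-cocycle of the line arrangement `A`: for every multiple point `p`,
if `q` divides the multiplicity then the values of `η` on the lines through `p` sum to `0`,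
and otherwise `η` is constant on the lines through `p`. -/
def IsCocycle (q : ℕ) (A : Finset (Set ProjPlane)) (η : Set ProjPlane → ZMod q) : Prop :=
  ∀ p : ProjPlane, IsMultPoint A p →
    ((q ∣ mult A p → ∑ L ∈ linesThrough A p, η L = 0) ∧
     (¬ q ∣ mult A p → ∀ L ∈ linesThrough A p, ∀ K ∈ linesThrough A p, η L = η K))

/-- A function on lines is non-constant on the arrangement `A`. -/
def NonConstant {α : Type*} (A : Finset (Set ProjPlane)) (η : Set ProjPlane → α) : Prop :=
  ∃ L ∈ A, ∃ K ∈ A, η L ≠ η K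

/-- A `(k,q)`-net structure on the line arrangement `A`, with classes `C 0, …, C (k-1)`:
the classes partition `A` into `k` classes of `q` lines each, and whenever two lines from
different classes meet, their intersection point lies on exactly one line of each class. -/
def IsNet (k q : ℕ) (A : Finset (Set ProjPlane)) (C : Fin k → Finset (Set ProjPlane)) : Prop :=
  (∀ L ∈ A, IsProjLine L) ∧
  A.card = k * q ∧
  (∀ i, (C i).card = q) ∧
  (∀ i j, i ≠ j → Disjoint (C i) (C j)) ∧
  (∀ i, C i ⊆ A) ∧
  (∀ L ∈ A, ∃ i, L ∈ C i) ∧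
  (∀ i j, i ≠ j → ∀ L ∈ C i, ∀ K ∈ C j, ∀ p : ProjPlane, p ∈ L → p ∈ K →
    ∀ m : Fin k, ∃! N, N ∈ C m ∧ p ∈ N)

/-- Lattice isomorphism of two line arrangements: a bijection between the lines such that
a subfamily of lines has a common point iff the image subfamily has a common point. -/
def LatticeIso (A B : Finset (Set ProjPlane)) : Prop :=
  ∃ φ : Set ProjPlane → Set ProjPlane, Set.BijOn φ ↑A ↑B ∧
    ∀ S : Finset (Set ProjPlane), S ⊆ A →
      ((∃ p : ProjPlane, ∀ L ∈ S, p ∈ L) ↔ ∃ p : ProjPlane, ∀ L ∈ S, p ∈ φ L)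

/-- The projective line with homogeneous equation `a·x + b·y + c·z = 0`. -/
def lineOf (a b c : ℂ) : Set ProjPlane :=
  {p : ProjPlane | a * p.rep 0 + b * p.rep 1 + c * p.rep 2 = 0}

lemma frank3 : Module.finrank ℂ (Fin 3 → ℂ) = 3 := by
  rw [Module.finrank_fintype_fun_eq_card]; simp

lemma ker_frank {f : (Fin 3 → ℂ) →ₗ[ℂ] ℂ} (hf : f ≠ 0) :
    Module.finrank ℂ (LinearMap.ker f) = 2 := by
  have hsur : Function.Surjective f := by
    obtain ⟨v, hv⟩ : ∃ v, f v ≠ 0 := by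
      by_contra h; push_neg at h; exact hf (LinearMap.ext fun v => by simp [h v])
    intro c
    exact ⟨(c / f v) • v, by simp [div_mul_cancel₀, hv]⟩
  have h := LinearMap.finrank_range_add_finrank_ker f
  rw [LinearMap.range_eq_top.mpr hsur, finrank_top, frank3] at h
  have : Module.finrank ℂ ℂ = 1 := Module.finrank_self ℂ
  omega

lemma mem_line_mk {f : (Fin 3 → ℂ) →ₗ[ℂ] ℂ} {v : Fin 3 → ℂ} (hv : v ≠ 0) :
    (Projectivization.mk ℂ v hv ∈ {p : ProjPlane | f p.rep = 0}) ↔ f v = 0 := by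
  set p : ProjPlane := Projectivization.mk ℂ v hv with hp
  have h1 : Projectivization.mk ℂ p.rep p.rep_nonzero = Projectivization.mk ℂ v hv :=
    Projectivization.mk_rep p
  rw [Projectivization.mk_eq_mk_iff] at h1
  obtain ⟨a, ha⟩ := h1
  have hfr : f p.rep = (a : ℂ) * f v := by rw [← ha]; simp [Units.smul_def]
  constructor
  · intro h; simp only [Set.mem_setOf_eq] at h
    rw [h] at hfr
    rcases mul_eq_zero.mp hfr.symm with h' | h'
    · exact absurd h' (Units.ne_zero a)
    · exact h'
  · intro h; simp only [Set.mem_setOf_eq, hfr, h, mul_zero]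

lemma line_nonempty {L : Set ProjPlane} (hL : IsProjLine L) : ∃ p, p ∈ L := by
  obtain ⟨f, hf, rfl⟩ := hL
  have h2 : Module.finrank ℂ (LinearMap.ker f) = 2 := ker_frank hf
  have : Nontrivial (LinearMap.ker f) := by
    apply Module.nontrivial_of_finrank_pos (R := ℂ); omega
  obtain ⟨v, hv0⟩ := exists_ne (0 : LinearMap.ker f)
  have hvne : (v : Fin 3 → ℂ) ≠ 0 := fun h => hv0 (Subtype.ext h)
  exact ⟨Projectivization.mk ℂ v hvne, (mem_line_mk hvne).mpr v.2⟩

lemma lines_meet {L K : Set ProjPlane} (hL : IsProjLine L) (hK : IsProjLine K) :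
    ∃ p, p ∈ L ∧ p ∈ K := by
  obtain ⟨f, hf, rfl⟩ := hL
  obtain ⟨g, hg, rfl⟩ := hK
  have h1 := Submodule.finrank_sup_add_finrank_inf_eq (LinearMap.ker f) (LinearMap.ker g)
  have h2 := ker_frank hf
  have h3 := ker_frank hg
  have h4 : Module.finrank ℂ ((LinearMap.ker f) ⊔ (LinearMap.ker g) : Submodule ℂ (Fin 3 → ℂ)) ≤ 3 := by
    have := Submodule.finrank_le ((LinearMap.ker f) ⊔ (LinearMap.ker g))
    rwa [frank3] at this
  have h5 : 0 < Module.finrank ℂ ((LinearMap.ker f) ⊓ (LinearMap.ker g) : Submodule ℂ (Fin 3 → ℂ)) := by omega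
  have : Nontrivial ((LinearMap.ker f) ⊓ (LinearMap.ker g) : Submodule ℂ (Fin 3 → ℂ)) :=
    Module.nontrivial_of_finrank_pos (R := ℂ) h5
  obtain ⟨v, hv0⟩ := exists_ne (0 : ((LinearMap.ker f) ⊓ (LinearMap.ker g) : Submodule ℂ (Fin 3 → ℂ)))
  have hvne : (v : Fin 3 → ℂ) ≠ 0 := fun h => hv0 (Subtype.ext h)
  refine ⟨Projectivization.mk ℂ v hvne, (mem_line_mk hvne).mpr ?_, (mem_line_mk hvne).mpr ?_⟩
  · exact (Submodule.mem_inf.mp v.2).1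
  · exact (Submodule.mem_inf.mp v.2).2

lemma meet_unique {L K : Set ProjPlane} (hL : IsProjLine L) (hK : IsProjLine K)
    (hne : L ≠ K) {p q : ProjPlane} (hpL : p ∈ L) (hpK : p ∈ K) (hqL : q ∈ L) (hqK : q ∈ K) :
    p = q := by
  by_contra hpq
  apply hne
  obtain ⟨f, hf, rfl⟩ := hL
  obtain ⟨g, hg, rfl⟩ := hK
  set u := p.rep with hu
  set w := q.rep with hw
  have hun : u ≠ 0 := p.rep_nonzero
  have hwn : w ≠ 0 := q.rep_nonzero
  have hind : LinearIndependent ℂ ![u, w] := by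
    rw [linearIndependent_fin2]
    refine ⟨by simpa using hwn, fun a ha => ?_⟩
    simp only [Matrix.cons_val_one, Matrix.head_cons, Matrix.cons_val_zero] at ha
    apply hpq
    have ha' : a ≠ 0 := by rintro rfl; simp at ha; exact hun ha.symm
    have : Projectivization.mk ℂ u hun = Projectivization.mk ℂ w hwn := by
      rw [Projectivization.mk_eq_mk_iff]
      exact ⟨Units.mk0 a ha', ha⟩
    exact ((Projectivization.mk_rep p).symm.trans this).trans (Projectivization.mk_rep q)
  have hspan : Module.finrank ℂ (Submodule.span ℂ (Set.range ![u, w])) = 2 := by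
    rw [finrank_span_eq_card hind]; simp
  have hrange : Set.range ![u, w] = {u, w} := by
    ext x; simp [Fin.exists_fin_two]; tauto
  have hle_f : Submodule.span ℂ (Set.range ![u, w]) ≤ LinearMap.ker f := by
    rw [hrange, Submodule.span_le]
    rintro x (rfl | rfl)
    · exact hpL
    · exact hqL
  have hle_g : Submodule.span ℂ (Set.range ![u, w]) ≤ LinearMap.ker g := by
    rw [hrange, Submodule.span_le]
    rintro x (rfl | rfl)
    · exact hpK
    · exact hqK
  have hf2 : LinearMap.ker f = Submodule.span ℂ (Set.range ![u, w]) :=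
    (Submodule.eq_of_le_of_finrank_le hle_f (by rw [hspan, ker_frank hf])).symm
  have hg2 : LinearMap.ker g = Submodule.span ℂ (Set.range ![u, w]) :=
    (Submodule.eq_of_le_of_finrank_le hle_g (by rw [hspan, ker_frank hg])).symm
  have hker : LinearMap.ker f = LinearMap.ker g := hf2.trans hg2.symm
  ext r
  simp only [Set.mem_setOf_eq, ← LinearMap.mem_ker, hker]

instance : Nonempty ProjPlane := by
  refine ⟨Projectivization.mk ℂ ![1,0,0] ?_⟩
  intro h
  have := congrFun h 0
  simp at this

lemma derang3 (σ τ : Fin 3 → Fin 3) (hσ : Function.Injective σ) (hτ : Function.Injective τ)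
    (h1 : ∀ j, σ j ≠ j) (h2 : ∀ j, τ j ≠ j) (h3 : ∀ j, σ j ≠ τ j) :
    (∀ j, σ j = j + 1) ∧ (∀ j, τ j = j + 2) ∨ (∀ j, σ j = j + 2) ∧ (∀ j, τ j = j + 1) := by
  revert hσ hτ h1 h2 h3; revert σ τ; decide

lemma fin3_ne (j j₀ : Fin 3) (h : j ≠ j₀) : j = j₀ + 1 ∨ j = j₀ + 2 := by revert j j₀; decide

/-- The combinatorial description of concurrent subfamilies. -/
def Good3 (a L M : Fin 3 → Set ProjPlane) (S : Finset (Set ProjPlane)) : Prop :=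
  S.card ≤ 1 ∨ (↑S : Set (Set ProjPlane)) ⊆ Set.range a ∨
  (∃ i j, (↑S : Set (Set ProjPlane)) ⊆ {a i, L j, M (i + j)}) ∨
  (∃ j j', (↑S : Set (Set ProjPlane)) ⊆ {L j, L j'}) ∨
  (∃ k k', (↑S : Set (Set ProjPlane)) ⊆ {M k, M k'})

lemma good_iff
    (A : Finset (Set ProjPlane)) (D : Fin 3 → Finset (Set ProjPlane))
    (hpl : ∀ X ∈ A, IsProjLine X)
    (hsub : ∀ c, D c ⊆ A) (hcov : ∀ X ∈ A, ∃ c, X ∈ D c)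
    (hdisj : ∀ c c', c ≠ c' → Disjoint (D c) (D c'))
    (hnet : ∀ i j, i ≠ j → ∀ L ∈ D i, ∀ K ∈ D j, ∀ p : ProjPlane, p ∈ L → p ∈ K →
      ∀ m : Fin 3, ∃! N, N ∈ D m ∧ p ∈ N)
    (a L M : Fin 3 → Set ProjPlane)
    (ha : ∀ i, a i ∈ D 0) (hL : ∀ j, L j ∈ D 1) (hM : ∀ k, M k ∈ D 2)
    (hD0 : ∀ X ∈ D 0, ∃ i, X = a i) (hD1 : ∀ X ∈ D 1, ∃ j, X = L j)
    (hD2 : ∀ X ∈ D 2, ∃ k, X = M k)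
    (grid : ∀ i j, ∃ p, p ∈ a i ∧ p ∈ L j ∧ p ∈ M (i + j))
    (hP : ∃ P, ∀ i, P ∈ a i)
    (hN1 : ¬ ∃ q, ∀ j, q ∈ L j) (hN2 : ¬ ∃ q, ∀ k, q ∈ M k)
    (S : Finset (Set ProjPlane)) (hS : S ⊆ A) :
    (∃ p, ∀ X ∈ S, p ∈ X) ↔ Good3 a L M S := by
  have hamem : ∀ i, a i ∈ A := fun i => hsub 0 (ha i)
  have hLmem : ∀ j, L j ∈ A := fun j => hsub 1 (hL j)
  have hMmem : ∀ k, M k ∈ A := fun k => hsub 2 (hM k)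
  constructor
  · rintro ⟨p, hp⟩
    by_cases hc : S.card ≤ 1
    · exact Or.inl hc
    -- S has at least two lines, all through p
    push_neg at hc
    by_cases hmix : ∃ X ∈ S, ∃ Y ∈ S, ∃ cX cY : Fin 3, cX ≠ cY ∧ X ∈ D cX ∧ Y ∈ D cY
    · -- p is a mixed point
      obtain ⟨X, hXS, Y, hYS, cX, cY, hcne, hXD, hYD⟩ := hmix
      have u : ∀ m : Fin 3, ∃! N, N ∈ D m ∧ p ∈ N :=
        hnet cX cY hcne X hXD Y hYD p (hp X hXS) (hp Y hYS)
      obtain ⟨N0, ⟨hN0D, hN0p⟩, hN0u⟩ := u 0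
      obtain ⟨N1, ⟨hN1D, hN1p⟩, hN1u⟩ := u 1
      obtain ⟨i, rfl⟩ := hD0 N0 hN0D
      obtain ⟨j, rfl⟩ := hD1 N1 hN1D
      obtain ⟨q, hqa, hqL, hqM⟩ := grid i j
      have hane : a i ≠ L j := by
        intro h
        exact (Finset.disjoint_left.mp (hdisj 0 1 (by decide)) (ha i)) (h ▸ hL j)
      have hpq : p = q :=
        meet_unique (hpl _ (hamem i)) (hpl _ (hLmem j)) hane hN0p hN1p hqa hqL
      subst hpq
      refine Or.inr (Or.inr (Or.inl ⟨i, j, ?_⟩))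
      intro X' hX'S
      simp only [Finset.mem_coe] at hX'S
      obtain ⟨c, hc'⟩ := hcov X' (hS hX'S)
      have hpX' : p ∈ X' := hp X' hX'S
      fin_cases c
      · have : X' = a i := hN0u X' ⟨hc', hpX'⟩
        simp [this]
      · have : X' = L j := hN1u X' ⟨hc', hpX'⟩
        simp [this]
      · obtain ⟨N2, ⟨hN2D, hN2p⟩, hN2u⟩ := u 2
        have h1 : X' = N2 := hN2u X' ⟨hc', hpX'⟩
        have h2 : M (i + j) = N2 := hN2u _ ⟨hM _, hqM⟩
        simp [h1, h2]
    · -- all lines of S in a single class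
      push_neg at hmix
      have hne : S.Nonempty := Finset.card_pos.mp (by omega)
      obtain ⟨X0, hX0⟩ := hne
      obtain ⟨c0, hc0⟩ := hcov X0 (hS hX0)
      have hall : ∀ X ∈ S, X ∈ D c0 := by
        intro X hX
        obtain ⟨c, hcX⟩ := hcov X (hS hX)
        by_cases h : c = c0
        · exact h ▸ hcX
        · exact absurd hc0 (hmix X hX X0 hX0 c c0 h hcX)
      fin_cases c0
      · refine Or.inr (Or.inl ?_)
        intro X hX
        simp only [Finset.mem_coe] at hX
        obtain ⟨i, rfl⟩ := hD0 X (hall X hX)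
        exact Set.mem_range_self i
      · -- all in class 1
        have hLS : ∀ X ∈ S, ∃ j, X = L j := fun X hX => hD1 X (hall X hX)
        have : ∃ j₀, L j₀ ∉ S := by
          by_contra hcon
          push_neg at hcon
          exact hN1 ⟨p, fun j => hp _ (hcon j)⟩
        obtain ⟨j₀, hj₀⟩ := this
        refine Or.inr (Or.inr (Or.inr (Or.inl ⟨j₀ + 1, j₀ + 2, ?_⟩)))
        intro X hX
        simp only [Finset.mem_coe] at hX
        obtain ⟨j, rfl⟩ := hLS X hX
        have : j ≠ j₀ := fun h => hj₀ (h ▸ hX)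
        rcases fin3_ne j j₀ this with h | h <;> simp [h]
      · have hMS : ∀ X ∈ S, ∃ k, X = M k := fun X hX => hD2 X (hall X hX)
        have : ∃ k₀, M k₀ ∉ S := by
          by_contra hcon
          push_neg at hcon
          exact hN2 ⟨p, fun k => hp _ (hcon k)⟩
        obtain ⟨k₀, hk₀⟩ := this
        refine Or.inr (Or.inr (Or.inr (Or.inr ⟨k₀ + 1, k₀ + 2, ?_⟩)))
        intro X hX
        simp only [Finset.mem_coe] at hX
        obtain ⟨k, rfl⟩ := hMS X hX
        have : k ≠ k₀ := fun h => hk₀ (h ▸ hX)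
        rcases fin3_ne k k₀ this with h | h <;> simp [h]
  · rintro (h1 | h2 | ⟨i, j, h3⟩ | ⟨j, j', h4⟩ | ⟨k, k', h5⟩)
    · rcases S.eq_empty_or_nonempty with rfl | ⟨X, hX⟩
      · exact ⟨Classical.arbitrary _, by simp⟩
      · obtain ⟨p, hpX⟩ := line_nonempty (hpl X (hS hX))
        refine ⟨p, fun Y hY => ?_⟩
        have : Y = X := Finset.card_le_one.mp h1 Y hY X hX
        exact this ▸ hpX
    · obtain ⟨P, hP'⟩ := hP
      refine ⟨P, fun X hX => ?_⟩
      obtain ⟨i, rfl⟩ := h2 hX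
      exact hP' i
    · obtain ⟨q, hqa, hqL, hqM⟩ := grid i j
      refine ⟨q, fun X hX => ?_⟩
      rcases h3 hX with rfl | rfl | rfl
      exacts [hqa, hqL, hqM]
    · obtain ⟨q, hq1, hq2⟩ := lines_meet (hpl _ (hLmem j)) (hpl _ (hLmem j'))
      refine ⟨q, fun X hX => ?_⟩
      rcases h4 hX with rfl | rfl
      exacts [hq1, hq2]
    · obtain ⟨q, hq1, hq2⟩ := lines_meet (hpl _ (hMmem k)) (hpl _ (hMmem k'))
      refine ⟨q, fun X hX => ?_⟩
      rcases h5 hX with rfl | rfl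
      exacts [hq1, hq2]

lemma one_conc (A : Finset (Set ProjPlane)) (C : Fin 3 → Finset (Set ProjPlane))
    (h : IsNet 3 3 A C) (ht : {p : ProjPlane | mult A p = 3}.ncard = 10) :
    ∃ i₀ : Fin 3, (∃ P, ∀ X ∈ C i₀, P ∈ X) ∧
      ∀ j, j ≠ i₀ → ¬ ∃ q, ∀ X ∈ C j, q ∈ X := by
  obtain ⟨hpl, hcard, hCcard, hdisj, hsub, hcov, hnet⟩ := h
  have hCA : ∀ {m : Fin 3} {X}, X ∈ C m → X ∈ A := fun {m X} hX => hsub m hX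
  have hCne : ∀ {m m' : Fin 3} {X Y}, m ≠ m' → X ∈ C m → Y ∈ C m' → X ≠ Y := by
    rintro m m' X Y hmm hX hY rfl
    exact (Finset.disjoint_left.mp (hdisj m m' hmm) hX) hY
  -- multiplicity of a mixed point is 3
  have key : ∀ (p : ProjPlane) (i j : Fin 3) (X Y : Set ProjPlane), i ≠ j → X ∈ C i → Y ∈ C j →
      p ∈ X → p ∈ Y → mult A p = 3 ∧ (∀ m : Fin 3, ∃! N, N ∈ C m ∧ p ∈ N) := by
    intro p i j X Y hij hX hY hpX hpY
    have u := hnet i j hij X hX Y hY p hpX hpY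
    refine ⟨?_, u⟩
    obtain ⟨N0, ⟨hN0, hp0⟩, hu0⟩ := u 0
    obtain ⟨N1, ⟨hN1, hp1⟩, hu1⟩ := u 1
    obtain ⟨N2, ⟨hN2, hp2⟩, hu2⟩ := u 2
    have hlt : linesThrough A p = {N0, N1, N2} := by
      ext Z
      simp only [linesThrough, Finset.mem_filter, Finset.mem_insert, Finset.mem_singleton]
      constructor
      · rintro ⟨hZA, hZp⟩
        obtain ⟨m, hm⟩ := hcov Z hZA
        fin_cases m
        · exact Or.inl (hu0 Z ⟨hm, hZp⟩)
        · exact Or.inr (Or.inl (hu1 Z ⟨hm, hZp⟩))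
        · exact Or.inr (Or.inr (hu2 Z ⟨hm, hZp⟩))
      · rintro (rfl | rfl | rfl)
        exacts [⟨hCA hN0, hp0⟩, ⟨hCA hN1, hp1⟩, ⟨hCA hN2, hp2⟩]
    have d01 : N0 ≠ N1 := hCne (by decide) hN0 hN1
    have d02 : N0 ≠ N2 := hCne (by decide) hN0 hN2
    have d12 : N1 ≠ N2 := hCne (by decide) hN1 hN2
    rw [mult, hlt]
    rw [Finset.card_insert_of_notMem (by simp [d01, d02]),
      Finset.card_insert_of_notMem (by simp [d12]), Finset.card_singleton]
  -- the set of mixed points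
  set Mixed : Set ProjPlane := {p | (∃ X ∈ C 0, p ∈ X) ∧ (∃ Y ∈ C 1, p ∈ Y)} with hMixedDef
  -- meeting point function
  have hmeetx : ∀ q : Set ProjPlane × Set ProjPlane, q.1 ∈ C 0 → q.2 ∈ C 1 →
      ∃ p, p ∈ q.1 ∧ p ∈ q.2 := fun q h1 h2 =>
    lines_meet (hpl _ (hCA h1)) (hpl _ (hCA h2))
  classical
  set meet : Set ProjPlane × Set ProjPlane → ProjPlane := fun q =>
    if h : ∃ p, p ∈ q.1 ∧ p ∈ q.2 then h.choose else Classical.arbitrary _ with hmeetDef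
  have hmeet : ∀ q : Set ProjPlane × Set ProjPlane, q.1 ∈ C 0 → q.2 ∈ C 1 →
      meet q ∈ q.1 ∧ meet q ∈ q.2 := by
    intro q h1 h2
    have hex := hmeetx q h1 h2
    simp only [hmeetDef, dif_pos hex]
    exact hex.choose_spec
  have hMixedEq : Mixed = ↑((C 0 ×ˢ C 1).image meet) := by
    ext p
    simp only [hMixedDef, Set.mem_setOf_eq, Finset.coe_image, Set.mem_image, Finset.mem_coe,
      Finset.mem_product]
    constructor
    · rintro ⟨⟨X, hX, hpX⟩, ⟨Y, hY, hpY⟩⟩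
      refine ⟨(X, Y), ⟨hX, hY⟩, ?_⟩
      have hm := hmeet (X, Y) hX hY
      exact (meet_unique (hpl _ (hCA hX)) (hpl _ (hCA hY)) (hCne (by decide) hX hY)
        hm.1 hm.2 hpX hpY).symm ▸ rfl
    · rintro ⟨⟨X, Y⟩, ⟨hX, hY⟩, rfl⟩
      have hm := hmeet (X, Y) hX hY
      exact ⟨⟨X, hX, hm.1⟩, ⟨Y, hY, hm.2⟩⟩
  have hMixedCard : Mixed.ncard = 9 := by
    rw [hMixedEq, Set.ncard_coe_finset]
    rw [Finset.card_image_of_injOn]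
    · rw [Finset.card_product, hCcard, hCcard]
    · rintro ⟨X, Y⟩ hXY ⟨X', Y'⟩ hXY' heq
      simp only [Finset.mem_coe, Finset.mem_product] at hXY hXY'
      have hm := hmeet (X, Y) hXY.1 hXY.2
      have hm' := hmeet (X', Y') hXY'.1 hXY'.2
      rw [heq] at hm
      have u := (key (meet (X', Y')) 0 1 X' Y' (by decide) hXY'.1 hXY'.2 hm'.1 hm'.2).2
      have e1 : X = X' := ((u 0).unique ⟨hXY.1, hm.1⟩ ⟨hXY'.1, hm'.1⟩)
      have e2 : Y = Y' := ((u 1).unique ⟨hXY.2, hm.2⟩ ⟨hXY'.2, hm'.2⟩)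
      simp [e1, e2]
  have hMixedSub : Mixed ⊆ {p : ProjPlane | mult A p = 3} := by
    rintro p ⟨⟨X, hX, hpX⟩, ⟨Y, hY, hpY⟩⟩
    exact (key p 0 1 X Y (by decide) hX hY hpX hpY).1
  have hfin : {p : ProjPlane | mult A p = 3}.Finite := by
    by_contra hinf
    rw [Set.Infinite.ncard hinf] at ht
    omega
  have hT : ({p : ProjPlane | mult A p = 3} \ Mixed).ncard = 1 := by
    have hMfin : Mixed.Finite := by
      rw [hMixedEq]; exact Finset.finite_toSet _
    rw [Set.ncard_diff hMixedSub hMfin, ht, hMixedCard]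
  obtain ⟨p₀, hp₀⟩ := Set.ncard_eq_one.mp hT
  have hp₀3 : mult A p₀ = 3 := by
    have : p₀ ∈ {p : ProjPlane | mult A p = 3} \ Mixed := hp₀ ▸ rfl
    exact this.1
  have hp₀nm : p₀ ∉ Mixed := by
    have : p₀ ∈ {p : ProjPlane | mult A p = 3} \ Mixed := hp₀ ▸ rfl
    exact this.2
  -- p₀ not mixed: all lines through it lie in one class
  have hmix_of : ∀ (p : ProjPlane) (i j : Fin 3) (X Y : Set ProjPlane), i ≠ j → X ∈ C i →
      Y ∈ C j → p ∈ X → p ∈ Y → p ∈ Mixed := by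
    intro p i j X Y hij hX hY hpX hpY
    have u := (key p i j X Y hij hX hY hpX hpY).2
    obtain ⟨N0, ⟨hN0, hp0⟩, _⟩ := u 0
    obtain ⟨N1, ⟨hN1, hp1⟩, _⟩ := u 1
    exact ⟨⟨N0, hN0, hp0⟩, ⟨N1, hN1, hp1⟩⟩
  have hne3 : (linesThrough A p₀).Nonempty := by
    rw [← Finset.card_pos, ← mult, hp₀3]; omega
  obtain ⟨X₀, hX₀⟩ := hne3
  have hX₀' := Finset.mem_filter.mp hX₀
  obtain ⟨i₀, hi₀⟩ := hcov X₀ hX₀'.1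
  have hLTsub : linesThrough A p₀ ⊆ C i₀ := by
    intro Z hZ
    have hZ' := Finset.mem_filter.mp hZ
    obtain ⟨m, hm⟩ := hcov Z hZ'.1
    by_cases hmi : m = i₀
    · exact hmi ▸ hm
    · exact absurd (hmix_of p₀ m i₀ Z X₀ hmi hm hi₀ hZ'.2 hX₀'.2) hp₀nm
  have hLTeq : linesThrough A p₀ = C i₀ := by
    apply Finset.eq_of_subset_of_card_le hLTsub
    rw [hCcard]
    have : (linesThrough A p₀).card = 3 := hp₀3
    omega
  refine ⟨i₀, ⟨p₀, fun X hX => ?_⟩, ?_⟩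
  · have hX' : X ∈ linesThrough A p₀ := by rw [hLTeq]; exact hX
    exact (Finset.mem_filter.mp hX').2
  · rintro j hj ⟨q, hq⟩
    obtain ⟨Y1, hY1, Y2, hY2, hYne⟩ := Finset.one_lt_card.mp (by rw [hCcard]; omega : 1 < (C j).card)
    have hqY1 : q ∈ Y1 := hq Y1 hY1
    have hqY2 : q ∈ Y2 := hq Y2 hY2
    -- all lines through q lie in class j
    have hqall : linesThrough A q ⊆ C j := by
      intro Z hZ
      have hZ' := Finset.mem_filter.mp hZ
      obtain ⟨m, hm⟩ := hcov Z hZ'.1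
      by_cases hmj : m = j
      · exact hmj ▸ hm
      · exfalso
        have u := (key q m j Z Y1 hmj hm hY1 hZ'.2 hqY1).2
        exact hYne ((u j).unique ⟨hY1, hqY1⟩ ⟨hY2, hqY2⟩)
    have hqeq : linesThrough A q = C j := by
      apply Finset.eq_of_subset_of_card_le hqall
      have hsub2 : C j ⊆ linesThrough A q := fun Z hZ => Finset.mem_filter.mpr ⟨hCA hZ, hq Z hZ⟩
      exact Finset.card_le_card hsub2
    have hq3 : mult A q = 3 := by rw [mult, hqeq, hCcard]
    have hqnm : q ∉ Mixed := by
      rintro ⟨⟨Z0, hZ0, hqZ0⟩, ⟨Z1, hZ1, hqZ1⟩⟩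
      have : Z0 ∈ C j := hqall (Finset.mem_filter.mpr ⟨hCA hZ0, hqZ0⟩)
      have h0j : (0 : Fin 3) = j := by
        by_contra h0j
        exact (hCne h0j hZ0 this) rfl
      have : Z1 ∈ C j := hqall (Finset.mem_filter.mpr ⟨hCA hZ1, hqZ1⟩)
      have h1j : (1 : Fin 3) = j := by
        by_contra h1j
        exact (hCne h1j hZ1 this) rfl
      rw [← h0j] at h1j
      exact absurd h1j (by decide)
    have : q ∈ ({p₀} : Set ProjPlane) := hp₀ ▸ (⟨hq3, hqnm⟩ : q ∈ {p : ProjPlane | mult A p = 3} \ Mixed)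
    have hqp₀ : q = p₀ := this
    subst hqp₀
    -- then C j ⊆ linesThrough q = C i₀, contradicting disjointness
    have : Y1 ∈ C i₀ := hLTeq ▸ (hqeq.symm ▸ hY1)
    exact (hCne hj hY1 this) rfl

lemma fin3_cases : ∀ i : Fin 3, i = 0 ∨ i = 1 ∨ i = 2 := by decide

lemma vec3_inj {α : Type*} {x y z : α} (h01 : x ≠ y) (h02 : x ≠ z) (h12 : y ≠ z) :
    Function.Injective (![x, y, z] : Fin 3 → α) := by
  intro i j hij
  fin_cases i <;> fin_cases j <;> simp_all <;> tauto

lemma net_struct (A : Finset (Set ProjPlane)) (C : Fin 3 → Finset (Set ProjPlane))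
    (h : IsNet 3 3 A C) (ht : {p : ProjPlane | mult A p = 3}.ncard = 10) :
    ∃ a L M : Fin 3 → Set ProjPlane,
      (Function.Injective fun x : Fin 3 × Fin 3 => ![a, L, M] x.1 x.2) ∧
      (∀ c i : Fin 3, ![a, L, M] c i ∈ A) ∧
      (∀ S, S ⊆ A → ((∃ p, ∀ X ∈ S, p ∈ X) ↔ Good3 a L M S)) := by
  obtain ⟨i₀, hconc, hnc⟩ := one_conc A C h ht
  obtain ⟨hpl, hcard, hCcard, hdisj, hsub, hcov, hnet⟩ := h
  set π : Equiv.Perm (Fin 3) := Equiv.swap 0 i₀ with hπ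
  set D : Fin 3 → Finset (Set ProjPlane) := fun c => C (π c) with hD
  have hπ0 : π 0 = i₀ := Equiv.swap_apply_left 0 i₀
  have hπ1 : π 1 ≠ i₀ := fun hh => by
    have : π 1 = π 0 := hh.trans hπ0.symm
    exact absurd (π.injective this) (by decide)
  have hπ2 : π 2 ≠ i₀ := fun hh => by
    have : π 2 = π 0 := hh.trans hπ0.symm
    exact absurd (π.injective this) (by decide)
  have hDcard : ∀ c, (D c).card = 3 := fun c => hCcard (π c)
  have hDdisj : ∀ c c', c ≠ c' → Disjoint (D c) (D c') :=
    fun c c' hcc => hdisj (π c) (π c') (fun e => hcc (π.injective e))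
  have hDsub : ∀ c, D c ⊆ A := fun c => hsub (π c)
  have hDcov : ∀ X ∈ A, ∃ c, X ∈ D c := by
    intro X hX
    obtain ⟨i, hi⟩ := hcov X hX
    exact ⟨π.symm i, by simp only [hD, Equiv.apply_symm_apply]; exact hi⟩
  have hDnet : ∀ i j, i ≠ j → ∀ X ∈ D i, ∀ Y ∈ D j, ∀ p : ProjPlane, p ∈ X → p ∈ Y →
      ∀ m : Fin 3, ∃! N, N ∈ D m ∧ p ∈ N := by
    intro i j hij X hX Y hY p hpX hpY m
    exact hnet (π i) (π j) (fun e => hij (π.injective e)) X hX Y hY p hpX hpY (π m)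
  have hDne : ∀ {m m' : Fin 3} {X Y : Set ProjPlane}, m ≠ m' → X ∈ D m → Y ∈ D m' → X ≠ Y := by
    rintro m m' X Y hmm hX hY rfl
    exact (Finset.disjoint_left.mp (hDdisj m m' hmm) hX) hY
  have hD0conc : ∃ P, ∀ X ∈ D 0, P ∈ X := by
    obtain ⟨P, hP⟩ := hconc
    refine ⟨P, fun X hX => hP X ?_⟩
    have hX' : X ∈ C (π 0) := hX
    rwa [hπ0] at hX'
  have hD1nc : ¬ ∃ q, ∀ X ∈ D 1, q ∈ X := hnc (π 1) hπ1
  have hD2nc : ¬ ∃ q, ∀ X ∈ D 2, q ∈ X := hnc (π 2) hπ2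
  -- enumerate class 0
  obtain ⟨a0, a1, a2, h01, h02, h12, hD0eq⟩ := Finset.card_eq_three.mp (hDcard 0)
  set a : Fin 3 → Set ProjPlane := ![a0, a1, a2] with haDef
  have ha : ∀ i, a i ∈ D 0 := by
    intro i; rw [hD0eq]; fin_cases i <;> simp [haDef]
  have haI : Function.Injective a := vec3_inj h01 h02 h12
  -- enumerate class 1
  obtain ⟨l0, l1, l2, g01, g02, g12, hD1eq⟩ := Finset.card_eq_three.mp (hDcard 1)
  set L : Fin 3 → Set ProjPlane := ![l0, l1, l2] with hLDef
  have hL : ∀ j, L j ∈ D 1 := by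
    intro j; rw [hD1eq]; fin_cases j <;> simp [hLDef]
  have hLI : Function.Injective L := vec3_inj g01 g02 g12
  have hD1mem : ∀ X ∈ D 1, ∃ j, X = L j := by
    intro X hX
    rw [hD1eq] at hX
    rcases Finset.mem_insert.mp hX with rfl | hX
    · exact ⟨0, rfl⟩
    rcases Finset.mem_insert.mp hX with rfl | hX
    · exact ⟨1, rfl⟩
    · exact ⟨2, (Finset.mem_singleton.mp hX) ▸ rfl⟩
  -- grid points
  have hmeetx : ∀ X Y : Set ProjPlane, X ∈ A → Y ∈ A → ∃ p, p ∈ X ∧ p ∈ Y :=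
    fun X Y hX hY => lines_meet (hpl X hX) (hpl Y hY)
  set pt : Fin 3 → Fin 3 → ProjPlane := fun i j =>
    if h : ∃ p, p ∈ a i ∧ p ∈ L j then h.choose else Classical.arbitrary _ with hptDef
  have hpt : ∀ i j, pt i j ∈ a i ∧ pt i j ∈ L j := by
    intro i j
    have hex := hmeetx (a i) (L j) (hDsub 0 (ha i)) (hDsub 1 (hL j))
    simp only [hptDef, dif_pos hex]
    exact hex.choose_spec
  have u' : ∀ i j : Fin 3, ∃ N, (N ∈ D 2 ∧ pt i j ∈ N) ∧
      ∀ y, (y ∈ D 2 ∧ pt i j ∈ y) → y = N := by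
    intro i j
    exact hDnet 0 1 (by decide) (a i) (ha i) (L j) (hL j) (pt i j) (hpt i j).1 (hpt i j).2 2
  choose m' hm' hm'u using u'
  -- injectivity facts for m'
  have f1 : ∀ i j j', m' i j = m' i j' → j = j' := by
    intro i j j' heq
    by_contra hjj
    have h1 : pt i j ∈ m' i j := (hm' i j).2
    have h2 : pt i j' ∈ m' i j := heq ▸ (hm' i j').2
    have hane : a i ≠ m' i j := hDne (by decide) (ha i) (hm' i j).1
    have hq : pt i j = pt i j' :=
      meet_unique (hpl _ (hDsub 0 (ha i))) (hpl _ (hDsub 2 ((hm' i j).1))) hane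
        (hpt i j).1 h1 (hpt i j').1 h2
    have u2 := hDnet 0 1 (by decide) (a i) (ha i) (L j) (hL j) (pt i j) (hpt i j).1 (hpt i j).2 1
    have e1 : L j = L j' := u2.unique ⟨hL j, (hpt i j).2⟩ ⟨hL j', hq ▸ (hpt i j').2⟩
    exact hjj (hLI e1)
  have f2 : ∀ i i' j, m' i j = m' i' j → i = i' := by
    intro i i' j heq
    by_contra hii
    have h1 : pt i j ∈ m' i j := (hm' i j).2
    have h2 : pt i' j ∈ m' i j := heq ▸ (hm' i' j).2
    have hLne : L j ≠ m' i j := hDne (by decide) (hL j) (hm' i j).1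
    have hq : pt i j = pt i' j :=
      meet_unique (hpl _ (hDsub 1 (hL j))) (hpl _ (hDsub 2 ((hm' i j).1))) hLne
        (hpt i j).2 h1 (hpt i' j).2 h2
    have u2 := hDnet 0 1 (by decide) (a i) (ha i) (L j) (hL j) (pt i j) (hpt i j).1 (hpt i j).2 0
    have e1 : a i = a i' := u2.unique ⟨ha i, (hpt i j).1⟩ ⟨ha i', hq ▸ (hpt i' j).1⟩
    exact hii (haI e1)
  set M : Fin 3 → Set ProjPlane := m' 0 with hMDef
  have hM : ∀ k, M k ∈ D 2 := fun k => (hm' 0 k).1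
  have hMI : Function.Injective M := fun k k' e => f1 0 k k' e
  have hD2mem : ∀ X ∈ D 2, ∃ k, X = M k := by
    intro X hX
    have himg : Finset.image M Finset.univ = D 2 := by
      apply Finset.eq_of_subset_of_card_le
      · intro Z hZ
        obtain ⟨k, _, rfl⟩ := Finset.mem_image.mp hZ
        exact hM k
      · rw [Finset.card_image_of_injective _ hMI, Finset.card_univ, hDcard]
        simp
    rw [← himg] at hX
    obtain ⟨k, _, rfl⟩ := Finset.mem_image.mp hX
    exact ⟨k, rfl⟩
  -- the latin square permutations
  have hσex : ∀ i j : Fin 3, ∃ k, m' i j = M k := fun i j => hD2mem (m' i j) (hm' i j).1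
  choose σ hσ using hσex
  have hσ0 : ∀ j, σ 0 j = j := by
    intro j
    apply hMI
    rw [← hσ 0 j, hMDef]
  have hσinj : ∀ i, Function.Injective (σ i) := by
    intro i j j' he
    apply f1 i
    rw [hσ i j, hσ i j', he]
  have hσne : ∀ i i' j, i ≠ i' → σ i j ≠ σ i' j := by
    intro i i' j hii he
    apply hii
    apply f2 i i' j
    rw [hσ i j, hσ i' j, he]
  have hd1 : ∀ j, σ 1 j ≠ j := fun j he => hσne 1 0 j (by decide) (he.trans (hσ0 j).symm)
  have hd2 : ∀ j, σ 2 j ≠ j := fun j he => hσne 2 0 j (by decide) (he.trans (hσ0 j).symm)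
  have hd12 : ∀ j, σ 1 j ≠ σ 2 j := fun j => hσne 1 2 j (by decide)
  -- the shared continuation
  have finish : ∀ a' : Fin 3 → Set ProjPlane, (∀ i, a' i ∈ D 0) → Function.Injective a' →
      (∀ i j, ∃ p, p ∈ a' i ∧ p ∈ L j ∧ p ∈ M (i + j)) →
      ∃ aa LL MM : Fin 3 → Set ProjPlane,
        (Function.Injective fun x : Fin 3 × Fin 3 => ![aa, LL, MM] x.1 x.2) ∧
        (∀ c i : Fin 3, ![aa, LL, MM] c i ∈ A) ∧
        (∀ S, S ⊆ A → ((∃ p, ∀ X ∈ S, p ∈ X) ↔ Good3 aa LL MM S)) := by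
    intro a' ha' ha'I grid
    have hD0mem : ∀ X ∈ D 0, ∃ i, X = a' i := by
      intro X hX
      have himg : Finset.image a' Finset.univ = D 0 := by
        apply Finset.eq_of_subset_of_card_le
        · intro Z hZ
          obtain ⟨i, _, rfl⟩ := Finset.mem_image.mp hZ
          exact ha' i
        · rw [Finset.card_image_of_injective _ ha'I, Finset.card_univ, hDcard]
          simp
      rw [← himg] at hX
      obtain ⟨i, _, rfl⟩ := Finset.mem_image.mp hX
      exact ⟨i, rfl⟩
    have hmem : ∀ c i : Fin 3, ![a', L, M] c i ∈ D c := by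
      intro c i
      fin_cases c
      · exact ha' i
      · exact hL i
      · exact hM i
    have hwithin : ∀ c : Fin 3, Function.Injective (![a', L, M] c) := by
      intro c
      fin_cases c
      · exact ha'I
      · exact hLI
      · exact hMI
    have hEinj : Function.Injective fun x : Fin 3 × Fin 3 => ![a', L, M] x.1 x.2 := by
      rintro ⟨c, i⟩ ⟨c', i'⟩ hxy
      simp only at hxy
      by_cases hcc : c = c'
      · subst hcc
        exact Prod.ext rfl (hwithin c hxy)
      · exact absurd hxy (hDne hcc (hmem c i) (hmem c' i'))
    have hP : ∃ P, ∀ i, P ∈ a' i := by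
      obtain ⟨P, hP⟩ := hD0conc
      exact ⟨P, fun i => hP _ (ha' i)⟩
    have hN1 : ¬ ∃ q, ∀ j, q ∈ L j := by
      rintro ⟨q, hq⟩
      apply hD1nc
      refine ⟨q, fun X hX => ?_⟩
      obtain ⟨j, rfl⟩ := hD1mem X hX
      exact hq j
    have hN2 : ¬ ∃ q, ∀ k, q ∈ M k := by
      rintro ⟨q, hq⟩
      apply hD2nc
      refine ⟨q, fun X hX => ?_⟩
      obtain ⟨k, rfl⟩ := hD2mem X hX
      exact hq k
    refine ⟨a', L, M, hEinj, fun c i => hDsub c (hmem c i), fun S hS => ?_⟩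
    exact good_iff A D hpl hDsub hDcov hDdisj hDnet a' L M ha' hL hM hD0mem hD1mem hD2mem
      grid hP hN1 hN2 S hS
  rcases derang3 (σ 1) (σ 2) (hσinj 1) (hσinj 2) hd1 hd2 hd12 with ⟨hA1, hA2⟩ | ⟨hB1, hB2⟩
  · apply finish a ha haI
    intro i j
    refine ⟨pt i j, (hpt i j).1, (hpt i j).2, ?_⟩
    rcases fin3_cases i with rfl | rfl | rfl
    · have e : (0 : Fin 3) + j = σ 0 j := by rw [hσ0 j, zero_add]
      rw [e, ← hσ 0 j]
      exact (hm' 0 j).2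
    · have e : (1 : Fin 3) + j = σ 1 j := by rw [hA1 j]; exact add_comm 1 j
      rw [e, ← hσ 1 j]
      exact (hm' 1 j).2
    · have e : (2 : Fin 3) + j = σ 2 j := by rw [hA2 j]; exact add_comm 2 j
      rw [e, ← hσ 2 j]
      exact (hm' 2 j).2
  · apply finish ![a 0, a 2, a 1] (by intro i; fin_cases i; exacts [ha 0, ha 2, ha 1]) ?_
    · intro i j
      rcases fin3_cases i with rfl | rfl | rfl
      · refine ⟨pt 0 j, (hpt 0 j).1, (hpt 0 j).2, ?_⟩
        have e : (0 : Fin 3) + j = σ 0 j := by rw [hσ0 j, zero_add]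
        rw [e, ← hσ 0 j]
        exact (hm' 0 j).2
      · refine ⟨pt 2 j, (hpt 2 j).1, (hpt 2 j).2, ?_⟩
        have e : (1 : Fin 3) + j = σ 2 j := by rw [hB2 j]; exact add_comm 1 j
        rw [e, ← hσ 2 j]
        exact (hm' 2 j).2
      · refine ⟨pt 1 j, (hpt 1 j).1, (hpt 1 j).2, ?_⟩
        have e : (2 : Fin 3) + j = σ 1 j := by rw [hB1 j]; exact add_comm 2 j
        rw [e, ← hσ 1 j]
        exact (hm' 1 j).2
    · exact vec3_inj (haI.ne (show (0:Fin 3) ≠ 2 by decide))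
        (haI.ne (show (0:Fin 3) ≠ 1 by decide)) (haI.ne (show (2:Fin 3) ≠ 1 by decide))

theorem statement3' (A B : Finset (Set ProjPlane))
    (CA CB : Fin 3 → Finset (Set ProjPlane))
    (hA : IsNet 3 3 A CA) (hB : IsNet 3 3 B CB)
    (hAt : {p : ProjPlane | mult A p = 3}.ncard = 10)
    (hBt : {p : ProjPlane | mult B p = 3}.ncard = 10) :
    LatticeIso A B := by
  obtain ⟨a, L, M, hEinjA, hmemA, hgoodA⟩ := net_struct A CA hA hAt
  obtain ⟨a', L', M', hEinjB, hmemB, hgoodB⟩ := net_struct B CB hB hBt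
  set E : Fin 3 × Fin 3 → Set ProjPlane := fun x => ![a, L, M] x.1 x.2 with hE
  set E' : Fin 3 × Fin 3 → Set ProjPlane := fun x => ![a', L', M'] x.1 x.2 with hE'
  have hEinjA' : Function.Injective E := hEinjA
  have hEinjB' : Function.Injective E' := hEinjB
  have hcardA : A.card = 9 := by have := hA.2.1; omega
  have hcardB : B.card = 9 := by have := hB.2.1; omega
  have hmemA' : ∀ x : Fin 3 × Fin 3, E x ∈ A := fun x => hmemA x.1 x.2
  have hmemB' : ∀ x : Fin 3 × Fin 3, E' x ∈ B := fun x => hmemB x.1 x.2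
  have hAeq : ∀ X ∈ A, ∃ x : Fin 3 × Fin 3, E x = X := by
    have himg : Finset.image E Finset.univ = A := by
      apply Finset.eq_of_subset_of_card_le
      · intro Z hZ
        obtain ⟨x, _, rfl⟩ := Finset.mem_image.mp hZ
        exact hmemA' x
      · rw [Finset.card_image_of_injective _ hEinjA', Finset.card_univ, hcardA]
        simp
    intro X hX
    rw [← himg] at hX
    obtain ⟨x, _, rfl⟩ := Finset.mem_image.mp hX
    exact ⟨x, rfl⟩
  have hBeq : ∀ X ∈ B, ∃ x : Fin 3 × Fin 3, E' x = X := by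
    have himg : Finset.image E' Finset.univ = B := by
      apply Finset.eq_of_subset_of_card_le
      · intro Z hZ
        obtain ⟨x, _, rfl⟩ := Finset.mem_image.mp hZ
        exact hmemB' x
      · rw [Finset.card_image_of_injective _ hEinjB', Finset.card_univ, hcardB]
        simp
    intro X hX
    rw [← himg] at hX
    obtain ⟨x, _, rfl⟩ := Finset.mem_image.mp hX
    exact ⟨x, rfl⟩
  set φ : Set ProjPlane → Set ProjPlane :=
    fun X => if h : ∃ x, E x = X then E' h.choose else X with hφ
  have hφE : ∀ x, φ (E x) = E' x := by
    intro x
    have hex : ∃ y, E y = E x := ⟨x, rfl⟩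
    simp only [hφ, dif_pos hex]
    exact congrArg E' (hEinjA' hex.choose_spec)
  refine ⟨φ, ⟨?_, ?_, ?_⟩, ?_⟩
  · intro X hX
    obtain ⟨x, rfl⟩ := hAeq X (Finset.mem_coe.mp hX)
    rw [hφE]
    exact Finset.mem_coe.mpr (hmemB' x)
  · intro X hX Y hY he
    obtain ⟨x, rfl⟩ := hAeq X (Finset.mem_coe.mp hX)
    obtain ⟨y, rfl⟩ := hAeq Y (Finset.mem_coe.mp hY)
    rw [hφE, hφE] at he
    rw [hEinjB' he]
  · intro Y hY
    obtain ⟨y, rfl⟩ := hBeq Y (Finset.mem_coe.mp hY)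
    exact ⟨E y, Finset.mem_coe.mpr (hmemA' y), hφE y⟩
  · intro S hS
    have hSB : S.image φ ⊆ B := by
      intro Z hZ
      obtain ⟨X, hX, rfl⟩ := Finset.mem_image.mp hZ
      obtain ⟨x, rfl⟩ := hAeq X (hS hX)
      rw [hφE]
      exact hmemB' x
    have h1 := hgoodA S hS
    have h2 := hgoodB (S.image φ) hSB
    have h3 : (∃ p, ∀ X ∈ S.image φ, p ∈ X) ↔ (∃ p : ProjPlane, ∀ X ∈ S, p ∈ φ X) := by
      constructor
      · rintro ⟨p, hp⟩
        exact ⟨p, fun X hX => hp (φ X) (Finset.mem_image_of_mem φ hX)⟩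
      · rintro ⟨p, hp⟩
        refine ⟨p, fun Z hZ => ?_⟩
        obtain ⟨X, hX, rfl⟩ := Finset.mem_image.mp hZ
        exact hp X hX
    rw [h1, ← h3, h2]
    -- transfer of Good3 across φ
    have hiff : ∀ R : Set (Fin 3 × Fin 3),
        ((↑S : Set (Set ProjPlane)) ⊆ E '' R) ↔ ((↑(S.image φ) : Set (Set ProjPlane)) ⊆ E' '' R) := by
      intro R
      constructor
      · intro hsub Z hZ
        rw [Finset.coe_image] at hZ
        obtain ⟨X, hX, rfl⟩ := hZ
        obtain ⟨x, hxR, hxE⟩ := hsub hX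
        exact ⟨x, hxR, by rw [← hxE, hφE]⟩
      · intro hsub X hX
        have hm : φ X ∈ E' '' R := hsub (by rw [Finset.coe_image]; exact ⟨X, hX, rfl⟩)
        obtain ⟨x, hxR, hxE⟩ := hm
        obtain ⟨z, rfl⟩ := hAeq X (hS (Finset.mem_coe.mp hX))
        rw [hφE] at hxE
        have hxz : x = z := hEinjB' hxE
        exact ⟨z, hxz ▸ hxR, rfl⟩
    have hcardim : (S.image φ).card = S.card := by
      apply Finset.card_image_of_injOn
      intro X hX Y hY he
      obtain ⟨x, rfl⟩ := hAeq X (hS hX)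
      obtain ⟨y, rfl⟩ := hAeq Y (hS hY)
      rw [hφE, hφE] at he
      rw [hEinjB' he]
    -- clause set equalities
    have eqr : Set.range a = E '' {x | x.1 = 0} := by
      ext Z
      constructor
      · rintro ⟨i, rfl⟩
        exact ⟨(0, i), rfl, rfl⟩
      · rintro ⟨⟨c, i⟩, hc, rfl⟩
        have : c = 0 := hc
        subst this
        exact ⟨i, rfl⟩
    have eqr' : Set.range a' = E' '' {x | x.1 = 0} := by
      ext Z
      constructor
      · rintro ⟨i, rfl⟩
        exact ⟨(0, i), rfl, rfl⟩
      · rintro ⟨⟨c, i⟩, hc, rfl⟩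
        have : c = 0 := hc
        subst this
        exact ⟨i, rfl⟩
    have eq3 : ∀ i j : Fin 3, ({a i, L j, M (i + j)} : Set (Set ProjPlane)) =
        E '' {((0 : Fin 3), i), ((1 : Fin 3), j), ((2 : Fin 3), i + j)} := by
      intro i j
      rw [Set.image_insert_eq, Set.image_insert_eq, Set.image_singleton]
      rfl
    have eq3' : ∀ i j : Fin 3, ({a' i, L' j, M' (i + j)} : Set (Set ProjPlane)) =
        E' '' {((0 : Fin 3), i), ((1 : Fin 3), j), ((2 : Fin 3), i + j)} := by
      intro i j
      rw [Set.image_insert_eq, Set.image_insert_eq, Set.image_singleton]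
      rfl
    have eqL : ∀ j j' : Fin 3, ({L j, L j'} : Set (Set ProjPlane)) =
        E '' {((1 : Fin 3), j), ((1 : Fin 3), j')} := by
      intro j j'
      rw [Set.image_insert_eq, Set.image_singleton]
      rfl
    have eqL' : ∀ j j' : Fin 3, ({L' j, L' j'} : Set (Set ProjPlane)) =
        E' '' {((1 : Fin 3), j), ((1 : Fin 3), j')} := by
      intro j j'
      rw [Set.image_insert_eq, Set.image_singleton]
      rfl
    have eqM : ∀ k k' : Fin 3, ({M k, M k'} : Set (Set ProjPlane)) =
        E '' {((2 : Fin 3), k), ((2 : Fin 3), k')} := by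
      intro k k'
      rw [Set.image_insert_eq, Set.image_singleton]
      rfl
    have eqM' : ∀ k k' : Fin 3, ({M' k, M' k'} : Set (Set ProjPlane)) =
        E' '' {((2 : Fin 3), k), ((2 : Fin 3), k')} := by
      intro k k'
      rw [Set.image_insert_eq, Set.image_singleton]
      rfl
    unfold Good3
    apply or_congr
    · rw [hcardim]
    apply or_congr
    · rw [eqr, eqr']
      exact hiff _
    apply or_congr
    · apply exists_congr; intro i
      apply exists_congr; intro j
      rw [eq3 i j, eq3' i j]
      exact hiff _
    apply or_congr
    · apply exists_congr; intro j
      apply exists_congr; intro j'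
      rw [eqL j j', eqL' j j']
      exact hiff _
    · apply exists_congr; intro k
      apply exists_congr; intro k'
      rw [eqM k k', eqM' k k']
      exact hiff _


/-- Any two (3,3)-nets with exactly 10 triple points and exactly 6 double
points are lattice isomorphic. -/
theorem statement3 (A B : Finset (Set ProjPlane))
    (CA CB : Fin 3 → Finset (Set ProjPlane))
    (hA : IsNet 3 3 A CA) (hB : IsNet 3 3 B CB)
    (hAt : {p : ProjPlane | mult A p = 3}.ncard = 10)
    (hBt : {p : ProjPlane | mult B p = 3}.ncard = 10)
    (hAd : {p : ProjPlane | mult A p = 2}.ncard = 6)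
    (hBd : {p : ProjPlane | mult B p = 2}.ncard = 6) :
    LatticeIso A B := by
  exact statement3' A B CA CB hA hB hAt hBt
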